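/- Define P₂(μ, B) = (1/3)·(1 − e^{−7μ}·((3/4)e^{−B}e^{−4μ} − (1 − (1/2)e^{−B})e^{−2μ} − (1 + (5/4)e^{−B}))). Then for all real μ > 0 and B > 0 one has P₂(μ, B) > 1/3 and (1 − P₂(μ, B))/2 < 1/3. (P₂(μ, B) is the probability, under the standard LGT model with rate λ, that a random transfer sequence on a pectinate four-taxon species tree of type (ab;*;c) induces the matching triplet topology ab|c, where μ = (1/3)λt₂ and B = 3λ(t₃ − t₂); each of the two mismatch topologies has probability (1 − P₂)/2.) -/
import Mathlib


/-- The probability that a random transfer sequence on a pectinate four-taxon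
species tree of type `(ab;*;c)` induces the matching triplet topology `ab|c`. -/
noncomputable def P₂ (μ B : ℝ) : ℝ :=
  (1/3) * (1 - Real.exp (-7 * μ) * ((3/4) * Real.exp (-B) * Real.exp (-4 * μ)
      - (1 - (1/2) * Real.exp (-B)) * Real.exp (-2 * μ)
      - (1 + (5/4) * Real.exp (-B))))

theorem match_prob_gt_third_ab_star_c (μ B : ℝ) (hμ : 0 < μ) (hB : 0 < B) :
    P₂ μ B > 1/3 ∧ (1 - P₂ μ B) / 2 < 1/3 := by
  have ha : Real.exp (-B) < 1 := Real.exp_lt_one_iff.mpr (by linarith)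
  have ha0 : 0 < Real.exp (-B) := Real.exp_pos _
  have hv : Real.exp (-4 * μ) < 1 := Real.exp_lt_one_iff.mpr (by linarith)
  have hv0 : 0 < Real.exp (-4 * μ) := Real.exp_pos _
  have hu : Real.exp (-2 * μ) < 1 := Real.exp_lt_one_iff.mpr (by linarith)
  have hu0 : 0 < Real.exp (-2 * μ) := Real.exp_pos _
  have hw0 : 0 < Real.exp (-7 * μ) := Real.exp_pos _
  have hav : Real.exp (-B) * Real.exp (-4 * μ) < 1 := by nlinarith
  have h : P₂ μ B > 1/3 := by
    unfold P₂
    nlinarith [mul_pos ha0 hv0, mul_pos ha0 hu0,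
      mul_pos hw0 (mul_pos ha0 hv0), mul_pos hw0 hu0, hav, mul_pos hw0 (mul_pos (mul_pos ha0 hv0) hu0)]
  exact ⟨h, by linarith⟩
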